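/- arXiv:2511.03294 — 4 statements merged into one kernel-verified Lean document; each statement's English description precedes it below -/
import Mathlib

section
/- For any C ≥ 1 and n ∈ ℤ, the indicator δ_{n=0} equals Σ_{c≤C} Σ_{b mod c, (b,c)=1} ∫_{-1/(c(c+c'))}^{1/(c(c+c''))} e((b/c + z)n) dz, where b'/c', b/c, b''/c'' are consecutive Farey fractions of level C. -/
/-!
The arcs `[b/c - 1/(c(c+c')), b/c + 1/(c(c+c''))]` around the Farey fractions of level `C` tile
the circle `ℝ/ℤ`: the right end of the arc at `b/c` is the mediant `(b+b'')/(c+c'')` of `b/c` and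
its successor `b''/c''`, and this is also the left end of the arc at `b''/c''`. So, writing `F` for
a primitive of `x ↦ e(xn)`, the sum of the integrals telescopes along the successor permutation
of the Farey fractions. Only the wrap-around from `(C-1)/C` to `1/1 = 0/1 + 1` is left over, and
it contributes `F(x+1) - F(x) = δ_{n=0}`.
-/

open Finset

noncomputable def e (x : ℝ) : ℂ := Complex.exp (2 * Real.pi * Complex.I * x)

section Primitive

open Complex

theorem e_add_intCast (x : ℝ) (k : ℤ) : e (x + k) = e x := by
  simp only [e, ofReal_add, ofReal_intCast, mul_add, exp_add]
  rw [mul_comm _ (k : ℂ), exp_int_mul_two_pi_mul_I, mul_one]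

noncomputable def ePrimitive (n : ℤ) (x : ℝ) : ℂ :=
  if n = 0 then x else e (x * n) / (2 * Real.pi * I * n)

theorem ePrimitive_add_one (n : ℤ) (x : ℝ) :
    ePrimitive n (x + 1) = ePrimitive n x + if n = 0 then 1 else 0 := by
  unfold ePrimitive
  split_ifs with hn
  · push_cast; rfl
  · rw [add_mul, one_mul, e_add_intCast, add_zero]

theorem hasDerivAt_e_mul (t x : ℝ) :
    HasDerivAt (fun y => e (y * t)) (e (x * t) * (2 * Real.pi * I * t)) x := by
  have h := ((hasDerivAt_id x).ofReal_comp.const_mul (2 * Real.pi * I * t)).cexp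
  convert h using 1
  · funext y; simp only [e, id]; push_cast; ring_nf
  · simp only [e, id]; push_cast; ring_nf

theorem hasDerivAt_ePrimitive (n : ℤ) (x : ℝ) : HasDerivAt (ePrimitive n) (e (x * n)) x := by
  unfold ePrimitive
  rcases eq_or_ne n 0 with rfl | hn
  · simpa [e] using (hasDerivAt_id x).ofReal_comp
  · have hK : (2 * Real.pi * I * n : ℂ) ≠ 0 := by simp [hn, Real.pi_ne_zero]
    simpa only [if_neg hn, ofReal_intCast, mul_div_cancel_right₀ _ hK] using
      (hasDerivAt_e_mul n x).div_const (2 * Real.pi * I * n)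

end Primitive

theorem integral_e_add_mul_intCast (n : ℤ) (q a b : ℝ) :
    ∫ z in a..b, e ((q + z) * n) = ePrimitive n (q + b) - ePrimitive n (q + a) :=
  intervalIntegral.integral_eq_sub_of_hasDerivAt
    (fun z _ => (hasDerivAt_ePrimitive n (q + z)).comp_const_add q z)
    ((by unfold e; fun_prop : Continuous fun z => e ((q + z) * n)).intervalIntegrable _ _)

theorem Int.ModEq.eq_of_mem_Ioc {m a x y : ℤ} (h : x ≡ y [ZMOD m])
    (hx : x ∈ Set.Ioc a (a + m)) (hy : y ∈ Set.Ioc a (a + m)) : x = y := by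
  have := Int.eq_zero_of_abs_lt_dvd h.dvd
    (abs_lt.mpr ⟨by linarith [hx.2, hy.1], by linarith [hx.1, hy.2]⟩)
  linarith

theorem Int.ModEq.of_mul_left_of_mul_self_eq_one {m a u x y : ℤ} (hu : u * u = 1)
    (hx : a * x ≡ u [ZMOD m]) (hy : a * y ≡ u [ZMOD m]) : x ≡ y [ZMOD m] := by
  have hxy : x * u ≡ y * u [ZMOD m] :=
    calc x * u ≡ x * (a * y) [ZMOD m] := hy.symm.mul_left x
      _ = y * (a * x) := by ring
      _ ≡ y * u [ZMOD m] := hx.mul_left y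
  simpa only [mul_assoc, hu, mul_one] using hxy.mul_right u

theorem Nat.div_eq_ite_of_mul_eq {q b c d : ℕ} (h : q * c = b * d + 1) (hb : b < c)
    (hd : 0 < d) : q / d = if d = 1 then 1 else 0 := by
  split_ifs with hd1
  · subst hd1
    rw [Nat.div_one]
    nlinarith
  · apply Nat.div_eq_of_lt
    by_contra! hdq
    have hd2 : 2 ≤ d := by omega
    nlinarith

theorem Nat.mod_mul_modEq_one_of_mul_eq {q b c d : ℕ} (h : q * c = b * d + 1) :
    q % d * c ≡ 1 [MOD d] :=
  calc q % d * c ≡ q * c [MOD d] := (Nat.mod_modEq q d).mul_right c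
    _ = b * d + 1 := h
    _ ≡ 0 + 1 [MOD d] := (Nat.modEq_zero_iff_dvd.mpr (dvd_mul_left d b)).add_right 1

theorem div_add_div_mul_add_eq_mediant {K : Type*} [Field K] {b c q d u : K} (hc : c ≠ 0) (hcd : c + d ≠ 0)
    (h : q * c - b * d = u) : b / c + u / (c * (c + d)) = (b + q) / (c + d) := by
  field_simp
  linear_combination -h

-- `u = 1` characterises the left, `u = -1` the right Farey neighbour of `b/c`.
def IsNeighbourDenom (C c b d : ℕ) (u : ℤ) : Prop :=
  (C : ℤ) - c < d ∧ (d : ℤ) ≤ C ∧ (b : ℤ) * d ≡ u [ZMOD c]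

def fareyIndex (C : ℕ) : Finset (ℕ × ℕ) :=
  (Icc 1 C ×ˢ range C).filter fun p => p.2 < p.1 ∧ Nat.Coprime p.2 p.1

-- The numerator `(b c'' + 1)/c` of the successor is reduced mod `c''`: this only changes the
-- successor `1/1` of `(C-1)/C`, which becomes `0/1`.
@[simps]
def fareySucc (c'' : ℕ → ℕ → ℕ) (p : ℕ × ℕ) : ℕ × ℕ :=
  (c'' p.1 p.2, (p.2 * c'' p.1 p.2 + 1) / p.1 % c'' p.1 p.2)

noncomputable def fareyArcLeft (c' : ℕ → ℕ → ℕ) (p : ℕ × ℕ) : ℝ :=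
  p.2 / p.1 - 1 / (p.1 * (p.1 + c' p.1 p.2))

noncomputable def fareyArcRight (c'' : ℕ → ℕ → ℕ) (p : ℕ × ℕ) : ℝ :=
  p.2 / p.1 + 1 / (p.1 * (p.1 + c'' p.1 p.2))

theorem mem_fareyIndex {C : ℕ} {p : ℕ × ℕ} :
    p ∈ fareyIndex C ↔ (1 ≤ p.1 ∧ p.1 ≤ C) ∧ p.2 < p.1 ∧ Nat.Coprime p.2 p.1 := by
  simp only [fareyIndex, mem_filter, mem_product, mem_Icc, mem_range]
  constructor
  · rintro ⟨⟨hc, -⟩, hb⟩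
    exact ⟨hc, hb⟩
  · rintro ⟨hc, hb⟩
    exact ⟨⟨hc, by omega⟩, hb⟩

namespace IsNeighbourDenom

variable {C c b d : ℕ}

theorem pos (hcC : c ≤ C) {u : ℤ} (h : IsNeighbourDenom C c b d u) : 0 < d := by
  have := h.1
  omega

theorem div_mul_cancel (h : IsNeighbourDenom C c b d (-1)) :
    (b * d + 1) / c * c = b * d + 1 := by
  apply Nat.div_mul_cancel
  have h0 := h.2.2.add_right 1
  rw [neg_add_cancel] at h0
  exact_mod_cast Int.modEq_zero_iff_dvd.mp h0

theorem eq_one_iff (hc : 1 ≤ c ∧ c ≤ C) (hb : b < c) (h : IsNeighbourDenom C c b d (-1)) :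
    d = 1 ↔ c = C ∧ b = C - 1 := by
  obtain ⟨hd₁, hd₂, hbd⟩ := h
  constructor
  · rintro rfl
    have hb' : (b : ℤ) ≡ c - 1 [ZMOD c] :=
      (mul_one (b : ℤ) ▸ hbd).trans (Int.modEq_iff_dvd.mpr ⟨1, by ring⟩)
    have := hb'.eq_of_mem_Ioc (a := -1) ⟨by omega, by omega⟩ ⟨by omega, by omega⟩
    omega
  · rintro ⟨rfl, rfl⟩
    have hd : (d : ℤ) ≡ 1 [ZMOD c] := by
      have hc₁ : ((c - 1 : ℕ) : ℤ) = c - 1 := by omega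
      rw [Int.modEq_iff_dvd, show (1 : ℤ) - d = -((-1 - ((c - 1 : ℕ) : ℤ) * d) + c * d) by
        rw [hc₁]; ring]
      exact dvd_neg.mpr (hbd.dvd.add (dvd_mul_right _ _))
    have := hd.eq_of_mem_Ioc (a := 0) ⟨by omega, by omega⟩ ⟨by omega, by omega⟩
    omega

end IsNeighbourDenom

section FareySucc

variable {C : ℕ} {c' c'' : ℕ → ℕ → ℕ} {p : ℕ × ℕ}

theorem fareySucc_mem (hp : p ∈ fareyIndex C)
    (hd : IsNeighbourDenom C p.1 p.2 (c'' p.1 p.2) (-1)) : fareySucc c'' p ∈ fareyIndex C := by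
  obtain ⟨⟨-, hcC⟩, -, -⟩ := mem_fareyIndex.mp hp
  have hpos := hd.pos hcC
  exact mem_fareyIndex.mpr ⟨⟨hpos, by exact_mod_cast hd.2.1⟩, Nat.mod_lt _ hpos,
    Nat.coprime_of_mul_modEq_one _ (Nat.mod_mul_modEq_one_of_mul_eq hd.div_mul_cancel)⟩

theorem leftDenom_fareySucc (hp : p ∈ fareyIndex C)
    (hd : IsNeighbourDenom C p.1 p.2 (c'' p.1 p.2) (-1))
    (hl : IsNeighbourDenom C (fareySucc c'' p).1 (fareySucc c'' p).2
      (c' (fareySucc c'' p).1 (fareySucc c'' p).2) 1) :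
    c' (fareySucc c'' p).1 (fareySucc c'' p).2 = p.1 := by
  obtain ⟨⟨-, hcC⟩, -, -⟩ := mem_fareyIndex.mp hp
  simp only [fareySucc_fst, fareySucc_snd] at hl ⊢
  have hpc : ((fareySucc c'' p).2 : ℤ) * p.1 ≡ 1 [ZMOD (fareySucc c'' p).1] := by
    exact_mod_cast Nat.mod_mul_modEq_one_of_mul_eq hd.div_mul_cancel
  have := (Int.ModEq.of_mul_left_of_mul_self_eq_one (one_mul 1) hl.2.2 hpc).eq_of_mem_Ioc
    (a := C - c'' p.1 p.2) ⟨hl.1, by linarith [hl.2.1]⟩ ⟨by linarith [hd.1], by linarith⟩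
  exact_mod_cast this

theorem injOn_fareySucc
    (hright : ∀ p ∈ fareyIndex C, IsNeighbourDenom C p.1 p.2 (c'' p.1 p.2) (-1))
    (hleft : ∀ p ∈ fareyIndex C, IsNeighbourDenom C p.1 p.2 (c' p.1 p.2) 1) :
    Set.InjOn (fareySucc c'') (fareyIndex C) := by
  have hden : ∀ p ∈ fareyIndex C, c' (fareySucc c'' p).1 (fareySucc c'' p).2 = p.1 :=
    fun p hp => leftDenom_fareySucc hp (hright p hp) (hleft _ (fareySucc_mem hp (hright p hp)))
  intro p hp q hq hpq
  have hc : p.1 = q.1 := by rw [← hden p hp, ← hden q hq, hpq]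
  have hd : c'' p.1 p.2 = c'' q.1 q.2 := congrArg Prod.fst hpq
  obtain ⟨-, hpb, -⟩ := mem_fareyIndex.mp hp
  obtain ⟨-, hqb, -⟩ := mem_fareyIndex.mp hq
  have hb := (hright p hp).2.2
  have hb' := (hright q hq).2.2
  rw [← hd, ← hc] at hb'
  rw [mul_comm] at hb hb'
  have := (Int.ModEq.of_mul_left_of_mul_self_eq_one (by norm_num) hb hb').eq_of_mem_Ioc
    (a := -1) ⟨by omega, by omega⟩ ⟨by omega, by omega⟩
  exact Prod.ext hc (by exact_mod_cast this)

theorem fareyArcRight_eq (hp : p ∈ fareyIndex C)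
    (hd : IsNeighbourDenom C p.1 p.2 (c'' p.1 p.2) (-1))
    (hl : IsNeighbourDenom C (fareySucc c'' p).1 (fareySucc c'' p).2
      (c' (fareySucc c'' p).1 (fareySucc c'' p).2) 1) :
    fareyArcRight c'' p = fareyArcLeft c' (fareySucc c'' p) + if p = (C, C - 1) then 1 else 0 := by
  obtain ⟨hc, hb, -⟩ := mem_fareyIndex.mp hp
  have hden := leftDenom_fareySucc hp hd hl
  simp only [fareyArcRight, fareyArcLeft, fareySucc_fst, fareySucc_snd] at hden ⊢
  rw [hden]
  set d := c'' p.1 p.2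
  set q := (p.2 * d + 1) / p.1
  have hq : q * p.1 = p.2 * d + 1 := hd.div_mul_cancel
  have hqR : (q : ℝ) * p.1 - p.2 * d = 1 := by
    rw [sub_eq_iff_eq_add']; exact_mod_cast hq
  have hwrap : ((q / d : ℕ) : ℝ) = if p = (C, C - 1) then 1 else 0 := by
    rw [Nat.div_eq_ite_of_mul_eq hq hb (hd.pos hc.2)]
    simp only [Prod.ext_iff, ← hd.eq_one_iff hc hb]
    split_ifs <;> simp
  have hmod : ((q % d : ℕ) : ℝ) + d * ((q / d : ℕ) : ℝ) = q := by
    exact_mod_cast Nat.mod_add_div q d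
  have hc₀ : (p.1 : ℝ) ≠ 0 := Nat.cast_ne_zero.mpr (by omega)
  have hd₀ : (d : ℝ) ≠ 0 := Nat.cast_ne_zero.mpr (hd.pos hc.2).ne'
  rw [← hwrap]
  calc (p.2 : ℝ) / p.1 + 1 / (p.1 * (p.1 + d)) = (p.2 + q) / (p.1 + d) :=
        div_add_div_mul_add_eq_mediant hc₀ (by positivity) hqR
    _ = q / d + -1 / (d * (d + p.1)) := by
        rw [div_add_div_mul_add_eq_mediant hd₀ (by positivity)
          (by linarith : (p.2 : ℝ) * d - q * p.1 = -1), add_comm (q : ℝ),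
          add_comm (p.1 : ℝ)]
    _ = ((q % d : ℕ) : ℝ) / d - 1 / (d * (d + p.1)) + ((q / d : ℕ) : ℝ) := by
        rw [← hmod]
        field_simp
        ring

end FareySucc

/-- the Farey dissection form of the delta symbol.  For `C ≥ 1` and `n ∈ ℤ`,
`δ_{n=0} = ∑_{c ≤ C} ∑_{b mod c, (b,c)=1} ∫_{-1/(c(c+c'))}^{1/(c(c+c''))} e((b/c+z)n) dz`,
where for each reduced fraction `b/c` of level `C` the numbers `c' = c'(c,b)` and
`c'' = c''(c,b)` are the denominators of the neighbouring Farey fractions, characterised by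
`C - c < c', c'' ≤ C`, `b·c' ≡ 1 (mod c)` and `b·c'' ≡ -1 (mod c)`. -/
theorem farey_delta_symbol
    (C : ℕ) (hC : 1 ≤ C) (n : ℤ)
    (c' c'' : ℕ → ℕ → ℕ)
    (hnbr : ∀ c ∈ Finset.Icc 1 C, ∀ b ∈ (Finset.range c).filter (fun b => Nat.Coprime b c),
      ((C : ℤ) - c < c' c b ∧ (c' c b : ℤ) ≤ C ∧ ((b : ℤ) * c' c b ≡ 1 [ZMOD (c : ℕ)])) ∧
      ((C : ℤ) - c < c'' c b ∧ (c'' c b : ℤ) ≤ C ∧ ((b : ℤ) * c'' c b ≡ -1 [ZMOD (c : ℕ)]))) :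
    (∑ c ∈ Finset.Icc 1 C, ∑ b ∈ (Finset.range c).filter (fun b => Nat.Coprime b c),
        ∫ z in (-(1 / ((c : ℝ) * ((c : ℝ) + c' c b))))..(1 / ((c : ℝ) * ((c : ℝ) + c'' c b))),
          e (((b : ℝ)/c + z) * n))
      = if n = 0 then 1 else 0 := by
  have hmem : ∀ p, p ∈ fareyIndex C ↔
      p.1 ∈ Icc 1 C ∧ p.2 ∈ (range p.1).filter (fun b => Nat.Coprime b p.1) := fun p => by
    simp only [mem_fareyIndex, mem_Icc, mem_filter, mem_range]
  have hleft : ∀ p ∈ fareyIndex C, IsNeighbourDenom C p.1 p.2 (c' p.1 p.2) 1 := fun p hp =>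
    (hnbr p.1 ((hmem p).mp hp).1 p.2 ((hmem p).mp hp).2).1
  have hright : ∀ p ∈ fareyIndex C, IsNeighbourDenom C p.1 p.2 (c'' p.1 p.2) (-1) := fun p hp =>
    (hnbr p.1 ((hmem p).mp hp).1 p.2 ((hmem p).mp hp).2).2
  have hsucc : ∀ p ∈ fareyIndex C, fareySucc c'' p ∈ fareyIndex C :=
    fun p hp => fareySucc_mem hp (hright p hp)
  have hinj := injOn_fareySucc hright hleft
  have hlast : (C, C - 1) ∈ fareyIndex C := mem_fareyIndex.mpr
    ⟨⟨hC, le_rfl⟩, by omega, (Nat.coprime_self_sub_left hC).mpr (Nat.coprime_one_left C)⟩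
  rw [← sum_finset_product' (fareyIndex C) _ _ hmem]
  calc _ = ∑ p ∈ fareyIndex C,
          (ePrimitive n (fareyArcRight c'' p) - ePrimitive n (fareyArcLeft c' p)) :=
        sum_congr rfl fun p _ => by
          rw [integral_e_add_mul_intCast, ← sub_eq_add_neg]
          rfl
    _ = ∑ p ∈ fareyIndex C, (ePrimitive n (fareyArcLeft c' (fareySucc c'' p)) +
          if p = (C, C - 1) then (if n = 0 then 1 else 0) else 0) -
          ∑ p ∈ fareyIndex C, ePrimitive n (fareyArcLeft c' p) := by
        rw [← sum_sub_distrib]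
        refine sum_congr rfl fun p hp => ?_
        rw [fareyArcRight_eq hp (hright p hp) (hleft _ (hsucc p hp))]
        by_cases hpl : p = (C, C - 1)
        · rw [if_pos hpl, if_pos hpl, ePrimitive_add_one]
        · rw [if_neg hpl, if_neg hpl, add_zero, add_zero]
    _ = if n = 0 then 1 else 0 := by
        have hperm : ∑ p ∈ fareyIndex C, ePrimitive n (fareyArcLeft c' (fareySucc c'' p)) =
            ∑ p ∈ fareyIndex C, ePrimitive n (fareyArcLeft c' p) :=
          sum_nbij _ hsucc hinj (surjOn_of_injOn_of_card_le _ hsucc hinj le_rfl) fun _ _ => rfl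
        rw [sum_add_distrib, sum_ite_eq', if_pos hlast, hperm, add_sub_cancel_left]
end

section
/- Let f ∈ ℕ and write f = f₁f₂ with f₁ squarefree, f₂ squarefull and gcd(f₁,f₂) = 1. Then for any C ≥ 1 and ε > 0, Σ_{c ≤ C, c squarefull} c^{1/2} gcd(c,f) ≪_ε C f₂^{1/2} f^ε. -/
/-! A squarefull `c` can be written `a² b³`. If `m ∣ a² b³` then `a` is a multiple of some `r`
with `m ≤ r² gcd(m, b)³`, so for fixed `b` at most `√(N / m) (gcd(m, b) / b)^{3/2}` such `a` have
`a² b³ ≤ N`. Summing over `b`, grouped by `gcd(m, b)`, there are `≪ τ(m) √(N / m)` squarefull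
`c ≤ N` divisible by `m`, so `∑ √c ≪ τ(m) N / √m` over them.

Bound `gcd(c, f) ≤ ∑_{e ∣ f, e ∣ c} e`. A squarefull multiple of `e ∣ f₁ f₂` is a multiple of
`m = e gcd(e, f₁)`, since the squarefree part `gcd(e, f₁)` must divide it squared, and
`e / √m ≤ √f₂`. Hence the sum is `≪ τ(f) τ(f²) N √f₂`, and the divisor bound `τ(n) ≪_δ n^δ`
finishes the proof. -/

open Finset
open scoped Classical

/-- `n` is squarefull if every prime dividing `n` divides it at least twice. -/
def Squarefull (n : ℕ) : Prop := ∀ p : ℕ, p.Prime → p ∣ n → p ^ 2 ∣ n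

theorem add_one_le_div_sub_one_mul_pow {x : ℝ} (hx : 1 < x) (a : ℕ) :
    (a + 1 : ℝ) ≤ x / (x - 1) * x ^ a := by
  have hbern := one_add_mul_le_pow (a := x - 1) (by linarith) (a + 1)
  rw [add_sub_cancel, pow_succ] at hbern
  rw [div_mul_eq_mul_div, le_div_iff₀ (by linarith)]
  push_cast at hbern
  nlinarith

theorem add_one_le_pow_of_two_le {y : ℝ} (hy : 2 ≤ y) (a : ℕ) : (a + 1 : ℝ) ≤ y ^ a :=
  calc (a + 1 : ℝ) ≤ 2 ^ a := by exact_mod_cast Nat.lt_two_pow_self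
    _ ≤ y ^ a := pow_le_pow_left₀ zero_le_two hy a

theorem Nat.cast_rpow_eq_prod_primeFactors {n : ℕ} (hn : n ≠ 0) (δ : ℝ) :
    (n : ℝ) ^ δ = ∏ p ∈ n.primeFactors, ((p : ℝ) ^ δ) ^ n.factorization p := by
  conv_lhs =>
    rw [← Nat.prod_factorization_pow_eq_self hn, Nat.prod_factorization_eq_prod_primeFactors]
  push_cast
  rw [← Real.finsetProd_rpow _ _ fun p _ => by positivity]
  exact prod_congr rfl fun p _ => (Real.rpow_pow_comm (Nat.cast_nonneg p) δ _).symm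

theorem Nat.exists_card_divisors_le_mul_rpow {δ : ℝ} (hδ : 0 < δ) :
    ∃ K : ℝ, 0 < K ∧ ∀ n : ℕ, n ≠ 0 → (#n.divisors : ℝ) ≤ K * (n : ℝ) ^ δ := by
  set x : ℝ := 2 ^ δ
  have hx : 1 < x := Real.one_lt_rpow one_lt_two hδ
  set M := x / (x - 1)
  have hM : 1 ≤ M := (one_le_div (by linarith)).2 (by linarith)
  set P := ⌈(2 : ℝ) ^ (1 / δ)⌉₊
  refine ⟨M ^ P, by positivity, fun n hn => ?_⟩
  -- only the primes below `2 ^ (1 / δ)` cost a factor `M`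
  have hlocal : ∀ p ∈ n.primeFactors, (n.factorization p + 1 : ℝ)
      ≤ (if p < P then M else 1) * ((p : ℝ) ^ δ) ^ n.factorization p := by
    intro p hp
    have hp2 : (2 : ℝ) ≤ p := by exact_mod_cast (Nat.prime_of_mem_primeFactors hp).two_le
    split_ifs with hpP
    · refine (add_one_le_div_sub_one_mul_pow hx _).trans ?_
      have hxp : x ≤ (p : ℝ) ^ δ := Real.rpow_le_rpow zero_le_two hp2 hδ.le
      gcongr
    · rw [one_mul]
      refine add_one_le_pow_of_two_le ?_ _
      calc (2 : ℝ) = ((2 : ℝ) ^ (1 / δ)) ^ δ := by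
            rw [← Real.rpow_mul zero_le_two, one_div_mul_cancel hδ.ne', Real.rpow_one]
        _ ≤ (p : ℝ) ^ δ := by
            gcongr
            exact (Nat.le_ceil _).trans (by exact_mod_cast not_lt.1 hpP)
  have hconst : ∏ p ∈ n.primeFactors, (if p < P then M else 1) ≤ M ^ P := by
    rw [prod_ite, prod_const_one, mul_one, prod_const]
    refine pow_le_pow_right₀ hM ((card_le_card fun p hp => ?_).trans (card_range P).le)
    exact mem_range.2 (mem_filter.1 hp).2
  calc (#n.divisors : ℝ) = ∏ p ∈ n.primeFactors, (n.factorization p + 1 : ℝ) := by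
        rw [Nat.card_divisors hn]; push_cast; rfl
    _ ≤ ∏ p ∈ n.primeFactors, (if p < P then M else 1) * ((p : ℝ) ^ δ) ^ n.factorization p :=
        prod_le_prod (fun _ _ => by positivity) hlocal
    _ = (∏ p ∈ n.primeFactors, if p < P then M else 1) * (n : ℝ) ^ δ := by
        rw [prod_mul_distrib, Nat.cast_rpow_eq_prod_primeFactors hn]
    _ ≤ M ^ P * (n : ℝ) ^ δ := by gcongr

-- The `t = 0` term is `1 / 0 = 0`.
noncomputable def zetaThreeHalves : ℝ := ∑' t : ℕ, 1 / √((t : ℝ) ^ 3)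

theorem summable_one_div_sqrt_cube : Summable fun t : ℕ => 1 / √((t : ℝ) ^ 3) := by
  refine (Real.summable_one_div_nat_rpow.2 (by norm_num : (1 : ℝ) < 3 / 2)).congr fun t => ?_
  rw [Real.sqrt_eq_rpow, ← Real.rpow_natCast_mul (Nat.cast_nonneg t)]
  norm_num

theorem zetaThreeHalves_pos : 0 < zetaThreeHalves :=
  summable_one_div_sqrt_cube.tsum_pos (fun t => by positivity) 1 (by norm_num)

theorem sum_div_gcd_le_card_divisors_mul_tsum {m : ℕ} (hm : m ≠ 0) (s : Finset ℕ) {F : ℕ → ℝ}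
    (hF : ∀ t, 0 ≤ F t) (hsum : Summable F) :
    ∑ b ∈ s, F (b / m.gcd b) ≤ #m.divisors * ∑' t, F t := by
  set split : ℕ → ℕ × ℕ := fun b => (m.gcd b, b / m.gcd b)
  have hsplit : Set.InjOn split s := fun b _ b' _ h => by
    rw [← Nat.mul_div_cancel' (Nat.gcd_dvd_right m b),
      ← Nat.mul_div_cancel' (Nat.gcd_dvd_right m b')]
    exact congrArg (fun q : ℕ × ℕ => q.1 * q.2) h
  have himage : s.image split ⊆ m.divisors ×ˢ s.image (fun b => b / m.gcd b) := by
    intro q hq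
    obtain ⟨b, hb, rfl⟩ := mem_image.1 hq
    exact mem_product.2 ⟨Nat.mem_divisors.2 ⟨Nat.gcd_dvd_left m b, hm⟩, mem_image_of_mem _ hb⟩
  calc ∑ b ∈ s, F (b / m.gcd b) = ∑ q ∈ s.image split, F q.2 := by
        rw [sum_image hsplit]
    _ ≤ ∑ q ∈ m.divisors ×ˢ s.image (fun b => b / m.gcd b), F q.2 :=
        sum_le_sum_of_subset_of_nonneg himage fun q _ _ => hF q.2
    _ = #m.divisors * ∑ t ∈ s.image (fun b => b / m.gcd b), F t := by
        simp only [sum_product, sum_const, nsmul_eq_mul]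
    _ ≤ #m.divisors * ∑' t, F t := by
        gcongr
        exact hsum.sum_le_tsum _ fun t _ => hF t

theorem Squarefull.sq_dvd_of_squarefree_dvd {c s : ℕ} (hc : Squarefull c) (hs : Squarefree s)
    (hsc : s ∣ c) : s ^ 2 ∣ c := by
  rcases eq_or_ne c 0 with rfl | hc0
  · exact dvd_zero _
  rw [← Nat.factorization_le_iff_dvd (pow_ne_zero 2 hs.ne_zero) hc0]
  intro p
  rw [Nat.factorization_pow, Finsupp.smul_apply, smul_eq_mul]
  rcases Nat.eq_zero_or_pos (s.factorization p) with h0 | hpos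
  · simp [h0]
  have hp : p.Prime := Nat.prime_of_mem_primeFactors (Finsupp.mem_support_iff.2 hpos.ne')
  have hpc : p ^ 2 ∣ c := hc p hp ((Nat.dvd_of_factorization_pos hpos.ne').trans hsc)
  have := (hp.pow_dvd_iff_le_factorization hc0).1 hpc
  have := hs.natFactorization_le_one p
  omega

theorem Squarefull.exists_eq_sq_mul_cube {c : ℕ} (hc : Squarefull c) :
    ∃ a b : ℕ, c = a ^ 2 * b ^ 3 := by
  obtain ⟨q, s, rfl, hq⟩ := Nat.sq_mul_squarefree c
  have hqs : q ∣ s := by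
    have hq2 : q * q ∣ s ^ 2 * q := by
      simpa [sq] using hc.sq_dvd_of_squarefree_dvd hq (dvd_mul_left q _)
    exact (hq.dvd_pow_iff_dvd two_ne_zero).1 (Nat.dvd_of_mul_dvd_mul_right
      (Nat.pos_of_ne_zero hq.ne_zero) hq2)
  obtain ⟨a, rfl⟩ := hqs
  exact ⟨a, q, by ring⟩

theorem Nat.exists_le_sq_and_dvd_of_dvd_sq (M : ℕ) :
    ∃ r, M ≤ r ^ 2 ∧ ∀ a, M ∣ a ^ 2 → r ∣ a := by
  obtain ⟨q, u, rfl, hq⟩ := Nat.sq_mul_squarefree M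
  refine ⟨u * q, ?_, fun a ha => ?_⟩
  · rw [mul_pow]
    exact Nat.mul_le_mul_left _ (Nat.le_self_pow two_ne_zero q)
  obtain ⟨a, rfl⟩ := (Nat.pow_dvd_pow_iff two_ne_zero).1 (dvd_of_mul_right_dvd ha)
  rcases eq_or_ne u 0 with rfl | hu
  · simp
  rw [mul_pow] at ha
  have hqa : q ∣ a ^ 2 := Nat.dvd_of_mul_dvd_mul_left (pow_pos (Nat.pos_of_ne_zero hu) 2) ha
  exact Nat.mul_dvd_mul_left u ((hq.dvd_pow_iff_dvd two_ne_zero).1 hqa)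

theorem Nat.exists_le_sq_mul_gcd_cube_and_dvd (m b : ℕ) :
    ∃ r, m ≤ r ^ 2 * m.gcd b ^ 3 ∧ ∀ a, m ∣ a ^ 2 * b ^ 3 → r ∣ a := by
  rcases eq_or_ne m 0 with rfl | hm
  · exact ⟨1, zero_le _, fun a _ => one_dvd a⟩
  set g := m.gcd (b ^ 3)
  have hg : 0 < g := Nat.gcd_pos_of_pos_left _ (Nat.pos_of_ne_zero hm)
  obtain ⟨r, hr, hdvd⟩ := Nat.exists_le_sq_and_dvd_of_dvd_sq (m / g)
  refine ⟨r, ?_, fun a ha => hdvd a ?_⟩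
  · have hg3 : g ≤ m.gcd b ^ 3 :=
      Nat.le_of_dvd (pow_pos (Nat.gcd_pos_of_pos_left _ (Nat.pos_of_ne_zero hm)) 3)
        gcd_pow_right_dvd_pow_gcd
    calc m = m / g * g := (Nat.div_mul_cancel (Nat.gcd_dvd_left _ _)).symm
      _ ≤ r ^ 2 * m.gcd b ^ 3 := Nat.mul_le_mul hr hg3
  · rw [Nat.div_dvd_iff_dvd_mul (Nat.gcd_dvd_left _ _) hg]
    exact dvd_gcd_mul_of_dvd_mul (mul_comm (a ^ 2) _ ▸ ha)

theorem card_filter_sq_mul_cube_dvd_le (m N b : ℕ) :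
    #{a ∈ Icc 1 N | a ^ 2 * b ^ 3 ≤ N ∧ m ∣ a ^ 2 * b ^ 3} ^ 2 * (m * (b / m.gcd b) ^ 3) ≤ N := by
  rcases Nat.eq_zero_or_pos b with rfl | hb
  · simp
  obtain ⟨r, hr, hdvd⟩ := Nat.exists_le_sq_mul_gcd_cube_and_dvd m b
  set A := {a ∈ Icc 1 N | a ^ 2 * b ^ 3 ≤ N ∧ m ∣ a ^ 2 * b ^ 3}
  set s := Nat.sqrt (N / b ^ 3)
  have hA : A ⊆ {a ∈ Ioc 0 s | r ∣ a} := by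
    intro a ha
    simp only [A, mem_filter, mem_Icc] at ha
    refine mem_filter.2 ⟨mem_Ioc.2 ⟨ha.1.1, ?_⟩, hdvd a ha.2.2⟩
    rw [Nat.le_sqrt, Nat.le_div_iff_mul_le (pow_pos hb 3), ← sq]
    exact ha.2.1
  have hAr : #A * r ≤ s := by
    calc #A * r ≤ s / r * r := Nat.mul_le_mul_right r
          ((card_le_card hA).trans (Nat.Ioc_filter_dvd_card_eq_div s r).le)
      _ ≤ s := Nat.div_mul_le_self s r
  have hArb : (#A * r) ^ 2 * b ^ 3 ≤ N :=
    (Nat.le_div_iff_mul_le (pow_pos hb 3)).1 ((Nat.pow_le_pow_left hAr 2).trans (Nat.sqrt_le' _))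
  have hb' : b = m.gcd b * (b / m.gcd b) := (Nat.mul_div_cancel' (Nat.gcd_dvd_right m b)).symm
  calc #A ^ 2 * (m * (b / m.gcd b) ^ 3)
      ≤ #A ^ 2 * (r ^ 2 * m.gcd b ^ 3 * (b / m.gcd b) ^ 3) := by gcongr
    _ = (#A * r) ^ 2 * (m.gcd b * (b / m.gcd b)) ^ 3 := by ring
    _ ≤ N := hb' ▸ hArb

theorem card_filter_sq_mul_cube_dvd_le_sqrt {m N b : ℕ} (hm : m ≠ 0) (hb : b ≠ 0) :
    (#{a ∈ Icc 1 N | a ^ 2 * b ^ 3 ≤ N ∧ m ∣ a ^ 2 * b ^ 3} : ℝ)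
      ≤ √(N / m) * (1 / √(((b / m.gcd b : ℕ) : ℝ) ^ 3)) := by
  set A := {a ∈ Icc 1 N | a ^ 2 * b ^ 3 ≤ N ∧ m ∣ a ^ 2 * b ^ 3}
  set t := b / m.gcd b
  have ht : 0 < t := Nat.div_pos (Nat.gcd_le_right (m := m) (Nat.pos_of_ne_zero hb))
    (Nat.gcd_pos_of_pos_left b (Nat.pos_of_ne_zero hm))
  have hA : (#A : ℝ) ^ 2 ≤ N / m / t ^ 3 := by
    rw [div_div, le_div_iff₀ (by positivity)]
    exact_mod_cast card_filter_sq_mul_cube_dvd_le m N b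
  calc (#A : ℝ) = √((#A : ℝ) ^ 2) := (Real.sqrt_sq (Nat.cast_nonneg _)).symm
    _ ≤ √(N / m / t ^ 3) := Real.sqrt_le_sqrt hA
    _ = √(N / m) * (1 / √((t : ℝ) ^ 3)) := by
        rw [Real.sqrt_div (by positivity), mul_one_div]

theorem card_squarefull_dvd_le {m : ℕ} (hm : m ≠ 0) (N : ℕ) :
    (#{c ∈ Icc 1 N | Squarefull c ∧ m ∣ c} : ℝ) ≤ zetaThreeHalves * #m.divisors * √(N / m) := by
  set A : ℕ → Finset ℕ := fun b => {a ∈ Icc 1 N | a ^ 2 * b ^ 3 ≤ N ∧ m ∣ a ^ 2 * b ^ 3}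
  have hcover : {c ∈ Icc 1 N | Squarefull c ∧ m ∣ c}
      ⊆ (Icc 1 N).biUnion fun b => (A b).image fun a => a ^ 2 * b ^ 3 := by
    intro c hc
    simp only [mem_filter, mem_Icc] at hc
    obtain ⟨⟨hc1, hcN⟩, hsf, hmc⟩ := hc
    obtain ⟨a, b, rfl⟩ := hsf.exists_eq_sq_mul_cube
    have ha : 0 < a := Nat.pos_of_ne_zero fun h => by simp [h] at hc1
    have hb : 0 < b := Nat.pos_of_ne_zero fun h => by simp [h] at hc1
    have ha2 : a ≤ a ^ 2 * b ^ 3 :=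
      (Nat.le_self_pow two_ne_zero a).trans (Nat.le_mul_of_pos_right _ (by positivity))
    have hb3 : b ≤ a ^ 2 * b ^ 3 :=
      (Nat.le_self_pow three_ne_zero b).trans (Nat.le_mul_of_pos_left _ (by positivity))
    simp only [A, mem_biUnion, mem_image, mem_filter, mem_Icc]
    exact ⟨b, ⟨hb, hb3.trans hcN⟩, a, ⟨⟨ha, ha2.trans hcN⟩, hcN, hmc⟩, rfl⟩
  calc (#{c ∈ Icc 1 N | Squarefull c ∧ m ∣ c} : ℝ) ≤ ∑ b ∈ Icc 1 N, (#(A b) : ℝ) := by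
        exact_mod_cast (card_le_card hcover).trans
          (card_biUnion_le.trans (sum_le_sum fun b _ => card_image_le))
    _ ≤ ∑ b ∈ Icc 1 N, √(N / m) * (1 / √(((b / m.gcd b : ℕ) : ℝ) ^ 3)) :=
        sum_le_sum fun b hb => card_filter_sq_mul_cube_dvd_le_sqrt hm (by simp at hb; omega)
    _ ≤ √(N / m) * (#m.divisors * zetaThreeHalves) := by
        rw [← mul_sum]
        gcongr
        exact sum_div_gcd_le_card_divisors_mul_tsum hm _ (fun t => by positivity)
          summable_one_div_sqrt_cube
    _ = zetaThreeHalves * #m.divisors * √(N / m) := by ring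

theorem sum_sqrt_squarefull_dvd_le {m : ℕ} (hm : m ≠ 0) (N : ℕ) :
    ∑ c ∈ Icc 1 N with Squarefull c ∧ m ∣ c, √(c : ℝ) ≤ zetaThreeHalves * #m.divisors * N / √m := by
  calc ∑ c ∈ Icc 1 N with Squarefull c ∧ m ∣ c, √(c : ℝ)
      ≤ #{c ∈ Icc 1 N | Squarefull c ∧ m ∣ c} * √(N : ℝ) := by
        rw [← nsmul_eq_mul]
        refine sum_le_card_nsmul _ _ _ fun c hc => Real.sqrt_le_sqrt ?_
        exact_mod_cast (mem_Icc.1 (mem_filter.1 hc).1).2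
    _ ≤ zetaThreeHalves * #m.divisors * √(N / m) * √(N : ℝ) := by
        gcongr
        exact card_squarefull_dvd_le hm N
    _ = zetaThreeHalves * #m.divisors * N / √m := by
        rw [Real.sqrt_div (Nat.cast_nonneg _), mul_assoc, div_mul_eq_mul_div,
          Real.mul_self_sqrt (Nat.cast_nonneg _), mul_div_assoc]

theorem sum_mul_gcd_le_sum_divisors (s : Finset ℕ) {w : ℕ → ℝ} (hw : ∀ c, 0 ≤ w c) {f : ℕ}
    (hf : f ≠ 0) : ∑ c ∈ s, w c * c.gcd f ≤ ∑ e ∈ f.divisors, e * ∑ c ∈ s with e ∣ c, w c := by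
  have hgcd : ∀ c, (c.gcd f : ℝ) ≤ ∑ e ∈ f.divisors with e ∣ c, (e : ℝ) := fun c =>
    single_le_sum (f := fun e : ℕ => (e : ℝ)) (fun _ _ => Nat.cast_nonneg _)
      (mem_filter.2 ⟨Nat.mem_divisors.2 ⟨Nat.gcd_dvd_right c f, hf⟩, Nat.gcd_dvd_left c f⟩)
  calc ∑ c ∈ s, w c * c.gcd f ≤ ∑ c ∈ s, w c * ∑ e ∈ f.divisors with e ∣ c, (e : ℝ) :=
        sum_le_sum fun c _ => mul_le_mul_of_nonneg_left (hgcd c) (hw c)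
    _ = ∑ e ∈ f.divisors, e * ∑ c ∈ s with e ∣ c, w c := by
        simp only [sum_filter, mul_sum]
        rw [sum_comm]
        refine sum_congr rfl fun e _ => sum_congr rfl fun c _ => ?_
        split_ifs <;> ring

theorem Squarefull.mul_gcd_dvd {c e f₁ f₂ : ℕ} (hc : Squarefull c) (hf₁ : Squarefree f₁)
    (hcop : f₁.Coprime f₂) (he : e ∣ f₁ * f₂) (hec : e ∣ c) : e * e.gcd f₁ ∣ c := by
  set s := e.gcd f₁
  have hs : 0 < s := Nat.gcd_pos_of_pos_right e (Nat.pos_of_ne_zero hf₁.ne_zero)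
  obtain ⟨e', he'⟩ : s ∣ e := Nat.gcd_dvd_left e f₁
  have he'f₂ : e' ∣ f₂ :=
    Nat.dvd_of_mul_dvd_mul_left hs (he' ▸ dvd_gcd_mul_of_dvd_mul (mul_comm f₁ f₂ ▸ he))
  have hcop' : (s ^ 2).Coprime e' :=
    ((hcop.coprime_dvd_left (Nat.gcd_dvd_right e f₁)).coprime_dvd_right he'f₂).pow_left 2
  have hs2 : s ^ 2 ∣ c :=
    hc.sq_dvd_of_squarefree_dvd (hf₁.squarefree_of_dvd (Nat.gcd_dvd_right e f₁))
      ((Nat.gcd_dvd_left e f₁).trans hec)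
  rw [show e * s = s ^ 2 * e' by rw [he']; ring]
  exact hcop'.mul_dvd_of_dvd_of_dvd hs2 ((Dvd.intro_left s he'.symm).trans hec)

theorem div_sqrt_mul_gcd_le_sqrt {e f₁ f₂ : ℕ} (hf₂ : f₂ ≠ 0) (he : e ∣ f₁ * f₂) :
    (e : ℝ) / √(e * e.gcd f₁ : ℕ) ≤ √(f₂ : ℝ) := by
  rcases Nat.eq_zero_or_pos e with rfl | he0
  · simp
  have hs : 0 < e.gcd f₁ := Nat.gcd_pos_of_pos_left f₁ he0
  have hle : e ≤ e.gcd f₁ * f₂ :=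
    Nat.le_of_dvd (Nat.mul_pos hs (Nat.pos_of_ne_zero hf₂))
      (dvd_gcd_mul_of_dvd_mul (mul_comm f₁ f₂ ▸ he))
  rw [div_le_iff₀ (Real.sqrt_pos.2 (by positivity)), ← Real.sqrt_mul (Nat.cast_nonneg _)]
  refine Real.le_sqrt_of_sq_le ?_
  have : e * e ≤ f₂ * (e * e.gcd f₁) := by nlinarith
  exact_mod_cast (sq e).symm ▸ this

theorem divisor_mul_sum_sqrt_squarefull_dvd_le {f f₁ f₂ e : ℕ} (N : ℕ) (hf : f = f₁ * f₂)
    (hf₁ : Squarefree f₁) (hcop : f₁.Coprime f₂) (hf0 : f ≠ 0) (he : e ∈ f.divisors) :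
    e * ∑ c ∈ Icc 1 N with Squarefull c ∧ e ∣ c, √(c : ℝ)
      ≤ zetaThreeHalves * #(f ^ 2).divisors * N * √(f₂ : ℝ) := by
  have hef : e ∣ f := Nat.dvd_of_mem_divisors he
  have hf₂ : f₂ ≠ 0 := right_ne_zero_of_mul (hf ▸ hf0)
  set m := e * e.gcd f₁
  have hm : m ≠ 0 := mul_ne_zero (Nat.ne_of_gt (Nat.pos_of_mem_divisors he))
    (Nat.gcd_pos_of_pos_right e (Nat.pos_of_ne_zero hf₁.ne_zero)).ne'
  have hsub : {c ∈ Icc 1 N | Squarefull c ∧ e ∣ c} ⊆ {c ∈ Icc 1 N | Squarefull c ∧ m ∣ c} :=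
    fun c hc => by
      simp only [mem_filter] at hc ⊢
      exact ⟨hc.1, hc.2.1, hc.2.1.mul_gcd_dvd hf₁ hcop (hf ▸ hef) hc.2.2⟩
  have hτ : (#m.divisors : ℝ) ≤ #(f ^ 2).divisors := by
    refine Nat.cast_le.2 (card_le_card (Nat.divisors_subset_of_dvd (pow_ne_zero 2 hf0) ?_))
    exact sq f ▸ Nat.mul_dvd_mul hef ((Nat.gcd_dvd_right e f₁).trans (hf ▸ dvd_mul_right f₁ f₂))
  calc e * ∑ c ∈ Icc 1 N with Squarefull c ∧ e ∣ c, √(c : ℝ)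
      ≤ e * ∑ c ∈ Icc 1 N with Squarefull c ∧ m ∣ c, √(c : ℝ) :=
        mul_le_mul_of_nonneg_left
          (sum_le_sum_of_subset_of_nonneg hsub fun _ _ _ => Real.sqrt_nonneg _) (Nat.cast_nonneg e)
    _ ≤ e * (zetaThreeHalves * #m.divisors * N / √(m : ℝ)) := by
        gcongr
        exact sum_sqrt_squarefull_dvd_le hm N
    _ = zetaThreeHalves * #m.divisors * N * (e / √(m : ℝ)) := by ring
    _ ≤ zetaThreeHalves * #(f ^ 2).divisors * N * √(f₂ : ℝ) := by
        have := zetaThreeHalves_pos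
        gcongr
        exact div_sqrt_mul_gcd_le_sqrt hf₂ (hf ▸ hef)

theorem sum_sqrt_mul_gcd_le {f f₁ f₂ : ℕ} (N : ℕ) (hf : f = f₁ * f₂) (hf₁ : Squarefree f₁)
    (hcop : f₁.Coprime f₂) (hf0 : f ≠ 0) :
    ∑ c ∈ Icc 1 N with Squarefull c, √(c : ℝ) * c.gcd f
      ≤ zetaThreeHalves * #f.divisors * #(f ^ 2).divisors * N * √(f₂ : ℝ) := by
  calc ∑ c ∈ Icc 1 N with Squarefull c, √(c : ℝ) * c.gcd f
      ≤ ∑ e ∈ f.divisors, e * ∑ c ∈ Icc 1 N with Squarefull c ∧ e ∣ c, √(c : ℝ) := by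
        simpa only [filter_filter] using sum_mul_gcd_le_sum_divisors {c ∈ Icc 1 N | Squarefull c}
          (fun c => Real.sqrt_nonneg (c : ℝ)) hf0
    _ ≤ ∑ e ∈ f.divisors, zetaThreeHalves * #(f ^ 2).divisors * N * √(f₂ : ℝ) :=
        sum_le_sum fun e he => divisor_mul_sum_sqrt_squarefull_dvd_le N hf hf₁ hcop hf0 he
    _ = zetaThreeHalves * #f.divisors * #(f ^ 2).divisors * N * √(f₂ : ℝ) := by
        rw [sum_const, nsmul_eq_mul]; ring

/-- with `f = f₁f₂`, `f₁` squarefree, `f₂` squarefull, coprime,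
`∑_{c ≤ C squarefull} c^{1/2} gcd(c,f) ≪_ε C f₂^{1/2} f^ε`. -/
theorem squarefull_gcd_sum_bound :
    ∀ ε : ℝ, 0 < ε → ∃ A : ℝ, 0 < A ∧
      ∀ (f f₁ f₂ : ℕ) (C : ℝ),
        1 ≤ f → f = f₁ * f₂ → Squarefree f₁ → Squarefull f₂ → Nat.Coprime f₁ f₂ →
        1 ≤ C →
        (∑ c ∈ (Finset.Icc 1 ⌊C⌋₊).filter Squarefull,
            Real.sqrt c * (Nat.gcd c f : ℝ))
          ≤ A * C * Real.sqrt f₂ * (f : ℝ) ^ ε := by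
  intro ε hε
  obtain ⟨K, hK, hτ⟩ := Nat.exists_card_divisors_le_mul_rpow (δ := ε / 3) (by positivity)
  have hZ := zetaThreeHalves_pos
  refine ⟨zetaThreeHalves * K ^ 2, by positivity, fun f f₁ f₂ C hf1 hf hf₁ _ hcop hC => ?_⟩
  have hf0 : f ≠ 0 := by omega
  have hpow : (f : ℝ) ^ (ε / 3) * ((f ^ 2 : ℕ) : ℝ) ^ (ε / 3) = (f : ℝ) ^ ε := by
    rw [Nat.cast_pow, ← Real.rpow_natCast, ← Real.rpow_mul (Nat.cast_nonneg _),
      ← Real.rpow_add (by exact_mod_cast Nat.pos_of_ne_zero hf0)]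
    ring_nf
  calc ∑ c ∈ (Icc 1 ⌊C⌋₊).filter Squarefull, √(c : ℝ) * c.gcd f
      ≤ zetaThreeHalves * #f.divisors * #(f ^ 2).divisors * ⌊C⌋₊ * √(f₂ : ℝ) :=
        sum_sqrt_mul_gcd_le _ hf hf₁ hcop hf0
    _ ≤ zetaThreeHalves * (K * (f : ℝ) ^ (ε / 3)) * (K * ((f ^ 2 : ℕ) : ℝ) ^ (ε / 3)) * C
          * √(f₂ : ℝ) := by
        gcongr
        exacts [hτ f hf0, hτ _ (pow_ne_zero 2 hf0), Nat.floor_le (by linarith)]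
    _ = zetaThreeHalves * K ^ 2 * C * √(f₂ : ℝ) * (f : ℝ) ^ ε := by
        rw [← hpow]; ring
end

section
/- Let p be prime, h, d₁, d₂, n₁ ∈ ℤ with p ∤ hn₁, and suppose the rational function x ↦ c(x)/b(x), where b(x) = (hp₂/P²)(P/x + d₁p₂) and c(x) = (hp₁²/P²)(P p₁ n₁²/(n₁²p₂²x + P n₂) + d₂), is the constant function 1 (as a function over 𝔽_p in the variable x). Then p | p₁³ - p₂³, p | d₂p₁² - d₁p₂², and p | n₂. -/
open Polynomial

/-- if the rational function `c(x)/b(x)` of the correlation-sum analysis is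
constantly `1` over `𝔽_p` — i.e. its numerator and denominator
`d₂n₂p₁²Px + n₁²p₁³Px + d₂n₁²p₁²p₂²x²` and
`n₂p₂P² + d₁n₂p₂²Px + n₁²p₂³Px + d₁n₁²p₂⁴x²`
agree as polynomials over `𝔽_p` — and `p ∤ hn₁`, `p ∤ p₁p₂P`, then
`p | p₁³ - p₂³`, `p | d₂p₁² - d₁p₂²` and `p | n₂`. -/
theorem rational_function_constant_one
    (p : ℕ) (hp : p.Prime)
    (h d₁ d₂ n₁ n₂ p₁ p₂ P : ℤ)
    (hhn₁ : ¬ (p : ℤ) ∣ h * n₁)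
    (hPp : ¬ (p : ℤ) ∣ p₁ * p₂ * P)
    (hconst :
      (Polynomial.C ((d₂ * n₂ * p₁^2 * P + n₁^2 * p₁^3 * P : ℤ) : ZMod p)) * Polynomial.X
          + (Polynomial.C ((d₂ * n₁^2 * p₁^2 * p₂^2 : ℤ) : ZMod p)) * Polynomial.X ^ 2
        = Polynomial.C ((n₂ * p₂ * P^2 : ℤ) : ZMod p)
          + (Polynomial.C ((d₁ * n₂ * p₂^2 * P + n₁^2 * p₂^3 * P : ℤ) : ZMod p)) * Polynomial.X
          + (Polynomial.C ((d₁ * n₁^2 * p₂^4 : ℤ) : ZMod p)) * Polynomial.X ^ 2) :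
    (p : ℤ) ∣ p₁^3 - p₂^3 ∧ (p : ℤ) ∣ d₂ * p₁^2 - d₁ * p₂^2 ∧ (p : ℤ) ∣ n₂ := by
  haveI : Fact p.Prime := ⟨hp⟩
  have hn₁ : ((n₁ : ZMod p)) ≠ 0 := fun hz =>
    hhn₁ (Dvd.dvd.mul_left ((ZMod.intCast_zmod_eq_zero_iff_dvd _ _).mp hz) h)
  have hp₁ : ((p₁ : ZMod p)) ≠ 0 := fun hz =>
    hPp (Dvd.dvd.mul_right (Dvd.dvd.mul_right
      ((ZMod.intCast_zmod_eq_zero_iff_dvd _ _).mp hz) p₂) P)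
  have hp₂ : ((p₂ : ZMod p)) ≠ 0 := fun hz =>
    hPp (Dvd.dvd.mul_right (Dvd.dvd.mul_left
      ((ZMod.intCast_zmod_eq_zero_iff_dvd _ _).mp hz) p₁) P)
  have hP : ((P : ZMod p)) ≠ 0 := fun hz =>
    hPp (Dvd.dvd.mul_left ((ZMod.intCast_zmod_eq_zero_iff_dvd _ _).mp hz) (p₁ * p₂))
  set A1 := (((d₂ * n₂ * p₁^2 * P + n₁^2 * p₁^3 * P) : ℤ) : ZMod p) with hA1
  set A2 := (((d₂ * n₁^2 * p₁^2 * p₂^2) : ℤ) : ZMod p) with hA2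
  set B0 := (((n₂ * p₂ * P^2) : ℤ) : ZMod p) with hB0
  set B1 := (((d₁ * n₂ * p₂^2 * P + n₁^2 * p₂^3 * P) : ℤ) : ZMod p) with hB1
  set B2 := (((d₁ * n₁^2 * p₂^4) : ℤ) : ZMod p) with hB2
  have e0 := Polynomial.ext_iff.mp hconst 0
  have e1 := Polynomial.ext_iff.mp hconst 1
  have e2 := Polynomial.ext_iff.mp hconst 2
  simp [Polynomial.coeff_add, Polynomial.coeff_C_mul, Polynomial.coeff_X_pow,
    Polynomial.coeff_C, Polynomial.coeff_X] at e0 e1 e2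
  push_cast at hA1 hA2 hB0 hB1 hB2
  have E0 : (n₂ : ZMod p) * (p₂ : ZMod p) * (P : ZMod p)^2 = 0 := by
    rw [← hB0, ← e0]
  have hn₂ : ((n₂ : ZMod p)) = 0 := by
    rcases mul_eq_zero.mp E0 with h' | h'
    · rcases mul_eq_zero.mp h' with h'' | h''
      · exact h''
      · exact absurd h'' hp₂
    · exact absurd (pow_eq_zero_iff two_ne_zero |>.mp h') hP
  have E1 : (d₂ : ZMod p) * n₂ * (p₁ : ZMod p)^2 * P + (n₁ : ZMod p)^2 * (p₁ : ZMod p)^3 * P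
      = (d₁ : ZMod p) * n₂ * (p₂ : ZMod p)^2 * P + (n₁ : ZMod p)^2 * (p₂ : ZMod p)^3 * P := by
    rw [← hA1, ← hB1]; exact e1
  have E2 : (d₂ : ZMod p) * (n₁ : ZMod p)^2 * (p₁ : ZMod p)^2 * (p₂ : ZMod p)^2
      = (d₁ : ZMod p) * (n₁ : ZMod p)^2 * (p₂ : ZMod p)^4 := by
    rw [← hA2, ← hB2]; exact e2
  have key1 : ((p₁ : ZMod p))^3 = (p₂ : ZMod p)^3 := by
    have h1' : (n₁ : ZMod p)^2 * (P : ZMod p) * ((p₁ : ZMod p)^3)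
        = (n₁ : ZMod p)^2 * (P : ZMod p) * ((p₂ : ZMod p)^3) := by
      linear_combination E1 - ((d₂ : ZMod p) * (p₁ : ZMod p)^2 * (P : ZMod p)
        - (d₁ : ZMod p) * (p₂ : ZMod p)^2 * (P : ZMod p)) * hn₂
    exact mul_left_cancel₀ (mul_ne_zero (pow_ne_zero 2 hn₁) hP) h1'
  have key2 : (d₂ : ZMod p) * (p₁ : ZMod p)^2 = (d₁ : ZMod p) * (p₂ : ZMod p)^2 := by
    have h2' : (n₁ : ZMod p)^2 * (p₂ : ZMod p)^2 * ((d₂ : ZMod p) * (p₁ : ZMod p)^2)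
        = (n₁ : ZMod p)^2 * (p₂ : ZMod p)^2 * ((d₁ : ZMod p) * (p₂ : ZMod p)^2) := by
      linear_combination E2
    exact mul_left_cancel₀ (mul_ne_zero (pow_ne_zero 2 hn₁) (pow_ne_zero 2 hp₂)) h2'
  refine ⟨?_, ?_, ?_⟩
  · rw [← ZMod.intCast_zmod_eq_zero_iff_dvd]; push_cast
    rw [sub_eq_zero]; exact key1
  · rw [← ZMod.intCast_zmod_eq_zero_iff_dvd]; push_cast
    rw [sub_eq_zero]; exact key2
  · rw [← ZMod.intCast_zmod_eq_zero_iff_dvd]; exact hn₂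
end

section
/- Let χ be a Dirichlet character modulo d and χ* the character modulo q it induces, where d | q. Then τ(χ*) = μ(q/d) χ(q/d) τ(χ), where τ denotes the Gauss sum. -/
/-!
Möbius inversion detects coprimality with `k = q / d`: `χ*(n) = ∑_{c ∣ (n, k)} μ(c) χ(n)`.
Substituting `n = c m` turns `τ(χ*)` into `∑_{c ∣ k} μ(c) χ(c) S(q / c)`, where
`S(M) = ∑_{m mod M} χ(m) e(m / M)` with `χ` read modulo `d`. As `m ↦ χ(m)` has period `d`,
shifting `m` by `d` multiplies `S(M)` by `e(d / M)`, which is `≠ 1` unless `M = d`; so only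
`c = k` survives, and `S(d) = τ(χ)`.
-/

open Finset

/-- The Gauss sum `τ(ψ) = ∑_{h mod m} ψ(h) e(h/m)` of a Dirichlet character mod `m`. -/
noncomputable def gaussS {m : ℕ} [NeZero m] (ψ : DirichletCharacter ℂ m) : ℂ :=
  ∑ h : ZMod m, ψ h * e ((h.val : ℝ) / m)

open ArithmeticFunction DirichletCharacter
open scoped ArithmeticFunction.Moebius

theorem Finset.sum_range_eq_sum_zmod_val {R : Type*} [AddCommMonoid R] (M : ℕ) [NeZero M]
    (f : ℕ → R) : ∑ n ∈ range M, f n = ∑ x : ZMod M, f x.val := by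
  obtain ⟨k, rfl⟩ := Nat.exists_eq_succ_of_ne_zero (NeZero.ne M)
  exact (Fin.sum_univ_eq_sum_range f _).symm

theorem Finset.sum_range_mul_filter_dvd {R : Type*} [AddCommMonoid R] {c : ℕ} (hc : c ≠ 0)
    (M : ℕ) (f : ℕ → R) : ∑ n ∈ range (c * M) with c ∣ n, f n = ∑ m ∈ range M, f (c * m) := by
  rw [← sum_image fun _ _ _ _ => Nat.eq_of_mul_eq_mul_left (Nat.pos_of_ne_zero hc)]
  congr 1
  ext n
  simp only [mem_filter, mem_range, mem_image]
  constructor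
  · rintro ⟨hn, m, rfl⟩
    exact ⟨m, Nat.lt_of_mul_lt_mul_left hn, rfl⟩
  · rintro ⟨m, hm, rfl⟩
    exact ⟨Nat.mul_lt_mul_of_pos_left hm (Nat.pos_of_ne_zero hc), dvd_mul_right c m⟩

theorem AddChar.sum_mul_eq_zero_of_periodic {G R : Type*} [AddCommGroup G] [Fintype G]
    [CommRing R] [IsDomain R] (ψ : AddChar G R) (f : G → R) {a : G} (hf : ∀ x, f (x + a) = f x)
    (ha : ψ a ≠ 1) : ∑ x, f x * ψ x = 0 := by
  have hshift : ∑ x, f x * ψ x = ψ a * ∑ x, f x * ψ x := calc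
    ∑ x, f x * ψ x = ∑ x, f (x + a) * ψ (x + a) :=
      (Fintype.sum_equiv (Equiv.addRight a) _ _ fun _ => rfl).symm
    _ = ψ a * ∑ x, f x * ψ x := by
      simp only [hf, AddChar.map_add_eq_mul, mul_sum]
      exact sum_congr rfl fun x _ => by ring
  have : (1 - ψ a) * ∑ x, f x * ψ x = 0 := by rw [one_sub_mul, ← hshift, sub_self]
  exact (mul_eq_zero.mp this).resolve_left (sub_ne_zero.mpr ha.symm)

theorem ArithmeticFunction.sum_moebius_filter_dvd {R : Type*} [Ring R] {k : ℕ} (hk : k ≠ 0)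
    (n : ℕ) : ∑ c ∈ k.divisors with c ∣ n, (μ c : R) = if n.Coprime k then 1 else 0 := by
  have hdivisors : {c ∈ k.divisors | c ∣ n} = (n.gcd k).divisors := by
    rw [← Nat.divisors_filter_dvd_of_dvd hk (Nat.gcd_dvd_right n k)]
    exact filter_congr fun c hc => (Nat.dvd_gcd_iff.trans
      (and_iff_left (Nat.dvd_of_mem_divisors hc))).symm
  have h := congrArg (· (n.gcd k)) (coe_moebius_mul_coe_zeta (R := R))
  simp only [coe_mul_zeta_apply, one_apply, intCoe_apply] at h
  rw [hdivisors, h]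

theorem DirichletCharacter.changeLevel_natCast {R : Type*} [CommMonoidWithZero R] {d q : ℕ}
    (hdq : d ∣ q) (χ : DirichletCharacter R d) (n : ℕ) :
    changeLevel hdq χ n = if n.Coprime (q / d) then χ n else 0 := by
  have hq : d * (q / d) = q := Nat.mul_div_cancel' hdq
  by_cases hnq : n.Coprime q
  · obtain ⟨u, hu⟩ := (ZMod.isUnit_iff_coprime n q).mpr hnq
    rw [if_pos (hnq.coprime_dvd_right (Nat.div_dvd_of_dvd hdq)), ← hu,
      changeLevel_eq_cast_of_dvd, hu, ZMod.cast_natCast hdq]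
  · rw [(changeLevel hdq χ).map_nonunit (mt (ZMod.isUnit_iff_coprime n q).mp hnq)]
    split_ifs with hnk
    · have hnd : ¬ n.Coprime d := fun hnd => hnq (hq ▸ Nat.Coprime.mul_right hnd hnk)
      exact (χ.map_nonunit (mt (ZMod.isUnit_iff_coprime n d).mp hnd)).symm
    · rfl

theorem e_natCast_div_eq_stdAddChar (M : ℕ) [NeZero M] (n : ℕ) :
    e (n / M) = ZMod.stdAddChar (n : ZMod M) := by
  simpa [e, mul_div_assoc] using (ZMod.stdAddChar_coe (N := M) n).symm

theorem gaussS_eq_sum_range {m : ℕ} [NeZero m] (ψ : DirichletCharacter ℂ m) :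
    gaussS ψ = ∑ n ∈ range m, ψ n * e (n / m) := by
  simp only [gaussS, sum_range_eq_sum_zmod_val m, ZMod.natCast_zmod_val]

/-- `χ` is read here as a function of period `d` on `ℤ/M`; unlike the character it induces
modulo `M`, it need not vanish at `n` with `gcd(n, M) > 1`. -/
noncomputable def liftedGaussSum {d : ℕ} (χ : DirichletCharacter ℂ d) (M : ℕ) : ℂ :=
  ∑ n ∈ range M, χ n * e (n / M)

theorem liftedGaussSum_self {d : ℕ} [NeZero d] (χ : DirichletCharacter ℂ d) :
    liftedGaussSum χ d = gaussS χ :=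
  (gaussS_eq_sum_range χ).symm

theorem liftedGaussSum_mul_eq_zero {d K : ℕ} (χ : DirichletCharacter ℂ d) (hK : K ≠ 1) :
    liftedGaussSum χ (d * K) = 0 := by
  rcases eq_or_ne (d * K) 0 with hM | hM
  · simp [liftedGaussSum, hM]
  have : NeZero (d * K) := ⟨hM⟩
  have hdK : d ∣ d * K := dvd_mul_right d K
  rw [liftedGaussSum, sum_range_eq_sum_zmod_val]
  simp only [e_natCast_div_eq_stdAddChar, ZMod.natCast_zmod_val]
  simp only [ZMod.natCast_val]
  refine AddChar.sum_mul_eq_zero_of_periodic _ (fun x => χ (ZMod.cast x))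
    (a := (d : ZMod (d * K))) (fun x => ?_) ?_
  · rw [ZMod.cast_add hdK, ZMod.cast_natCast hdK, ZMod.natCast_self, add_zero]
  · rw [← AddChar.map_zero_eq_one (ZMod.stdAddChar (N := d * K)),
      ZMod.injective_stdAddChar.ne_iff, Ne, ZMod.natCast_eq_zero_iff]
    exact fun h => hK ((Nat.mul_eq_left (left_ne_zero_of_mul hM)).mp (Nat.dvd_antisymm h hdK))

theorem sum_range_filter_dvd_eq_mul_liftedGaussSum {d c M q : ℕ} (χ : DirichletCharacter ℂ d)
    (hc : c ≠ 0) (hq : c * M = q) :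
    ∑ n ∈ range q with c ∣ n, χ n * e (n / q) = χ c * liftedGaussSum χ M := by
  subst hq
  rw [sum_range_mul_filter_dvd hc, liftedGaussSum, mul_sum]
  refine sum_congr rfl fun m _ => ?_
  push_cast
  rw [map_mul, mul_div_mul_left _ _ (Nat.cast_ne_zero.mpr hc), mul_assoc]

theorem gaussS_changeLevel_eq_sum_divisors {d q : ℕ} [NeZero q] (hdq : d ∣ q)
    (χ : DirichletCharacter ℂ d) :
    gaussS (changeLevel hdq χ)
      = ∑ c ∈ (q / d).divisors, ((μ c : ℤ) : ℂ) * χ c * liftedGaussSum χ (d * (q / d / c)) := by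
  have hk : q / d ≠ 0 := (Nat.div_ne_zero_iff_of_dvd hdq).mpr
    ⟨NeZero.ne q, ne_zero_of_dvd_ne_zero (NeZero.ne q) hdq⟩
  calc gaussS (changeLevel hdq χ)
      = ∑ n ∈ range q, ∑ c ∈ (q / d).divisors,
          if c ∣ n then ((μ c : ℤ) : ℂ) * (χ n * e (n / q)) else 0 := by
        rw [gaussS_eq_sum_range]
        refine sum_congr rfl fun n _ => ?_
        rw [← sum_filter, ← sum_mul, sum_moebius_filter_dvd hk, changeLevel_natCast]
        split_ifs <;> simp
    _ = ∑ c ∈ (q / d).divisors, ((μ c : ℤ) : ℂ) * ∑ n ∈ range q with c ∣ n, χ n * e (n / q) := by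
        rw [sum_comm]
        simp only [sum_filter, mul_sum, mul_ite, mul_zero]
    _ = _ := sum_congr rfl fun c hc => by
        have hq : c * (d * (q / d / c)) = q := by
          rw [mul_left_comm, Nat.mul_div_cancel' (Nat.dvd_of_mem_divisors hc),
            Nat.mul_div_cancel' hdq]
        rw [sum_range_filter_dvd_eq_mul_liftedGaussSum χ (Nat.pos_of_mem_divisors hc).ne' hq,
          mul_assoc]

theorem gauss_sum_induced_general
    (d q : ℕ) [NeZero d] [NeZero q] (hdq : d ∣ q)
    (χ : DirichletCharacter ℂ d) :
    gaussS (DirichletCharacter.changeLevel hdq χ)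
      = ((ArithmeticFunction.moebius (q / d) : ℤ) : ℂ) * χ (((q / d : ℕ) : ZMod d)) * gaussS χ := by
  have hk : q / d ≠ 0 := (Nat.div_ne_zero_iff_of_dvd hdq).mpr ⟨NeZero.ne q, NeZero.ne d⟩
  rw [gaussS_changeLevel_eq_sum_divisors,
    sum_eq_single_of_mem (q / d) (Nat.mem_divisors_self _ hk),
    Nat.div_self (Nat.pos_of_ne_zero hk), mul_one, liftedGaussSum_self]
  intro c hc hck
  have hquot : q / d / c ≠ 1 := fun h => hck <| by
    simpa [h] using Nat.div_mul_cancel (Nat.dvd_of_mem_divisors hc)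
  rw [liftedGaussSum_mul_eq_zero χ hquot, mul_zero]

/-- for `χ` primitive modulo `d` and `d | q`, the Gauss sum of the induced
character `χ*` modulo `q` satisfies `τ(χ*) = μ(q/d) χ(q/d) τ(χ)`. -/
theorem gauss_sum_induced
    (d q : ℕ) [NeZero d] [NeZero q] (hdq : d ∣ q)
    (χ : DirichletCharacter ℂ d) (hχ : χ.IsPrimitive) :
    gaussS (DirichletCharacter.changeLevel hdq χ)
      = ((ArithmeticFunction.moebius (q / d) : ℤ) : ℂ) * χ (((q / d : ℕ) : ZMod d)) * gaussS χ :=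
  gauss_sum_induced_general d q hdq χ
end
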